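/- arXiv:1203.4040 — 9 statements merged into one kernel-verified Lean document; each statement's English description precedes it below -/
import Mathlib

section
/- If a binary linear code C with m×n parity-check matrix H (no all-zero columns) is 3-combinable, then n ≤ 2(2^m − 1). -/
open Matrix

/-- Hamming weight of a row vector over GF(2). -/
def hammingWt {e : ℕ} (v : Fin e → ZMod 2) : ℕ :=
  (Finset.univ.filter fun j => v j ≠ 0).card

/-- `H` has no all-zero column. -/
def NoZeroColumn {m n : ℕ} (H : Matrix (Fin m) (Fin n) (ZMod 2)) : Prop :=
  ∀ j, ∃ i, H i j ≠ 0

/-- The code with parity-check matrix `H` is `ε`-combinable: every submatrix of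
`H_E` (whose rows are all nonzero GF(2) linear combinations `vecMul u H`, `u ≠ 0`,
of the rows of `H`) formed by selecting `ε` columns contains a row of Hamming
weight 1 or 2. -/
def Combinable (m n ε : ℕ) (H : Matrix (Fin m) (Fin n) (ZMod 2)) : Prop :=
  ∀ s : Fin ε → Fin n, Function.Injective s →
    ∃ u : Fin m → ZMod 2, u ≠ 0 ∧
      (hammingWt (fun j => (vecMul u H) (s j)) = 1 ∨
       hammingWt (fun j => (vecMul u H) (s j)) = 2)

/-- If `C` (no all-zero column) is 3-combinable, then `n ≤ 2 * (2^m − 1)`. -/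
theorem stmt_2 (m n : ℕ) (H : Matrix (Fin m) (Fin n) (ZMod 2))
    (hcol : NoZeroColumn H) (hcomb : Combinable m n 3 H) :
    n ≤ 2 * (2 ^ m - 1) := by
  classical
  set f : Fin n → (Fin m → ZMod 2) := fun j i => H i j with hf
  -- each fiber of f has at most 2 elements
  have hfib : ∀ a ∈ (Finset.univ : Finset (Fin n)).image f,
      ((Finset.univ : Finset (Fin n)).filter fun x => f x = a).card ≤ 2 := by
    intro a _
    by_contra hgt
    push_neg at hgt
    obtain ⟨t, hts, htc⟩ := Finset.exists_subset_card_eq hgt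
    -- get an equiv Fin 3 ≃ t
    have e : Fin 3 ≃ t := (Finset.equivFinOfCardEq htc).symm
    set s : Fin 3 → Fin n := fun k => (e k : Fin n) with hs
    have hsinj : Function.Injective s := by
      intro x y hxy
      exact e.injective (Subtype.ext hxy)
    obtain ⟨u, hu0, hw⟩ := hcomb s hsinj
    have hconst : ∀ k : Fin 3, vecMul u H (s k) = ∑ i, u i * a i := by
      intro k
      have hmem : s k ∈ Finset.univ.filter fun x => f x = a := hts (e k).2
      have hfa : f (s k) = a := (Finset.mem_filter.mp hmem).2
      simp only [vecMul, dotProduct]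
      refine Finset.sum_congr rfl fun i _ => ?_
      have : H i (s k) = a i := by rw [← hfa]
      rw [this]
    set v : ZMod 2 := ∑ i, u i * a i with hv
    have hham : hammingWt (fun j => vecMul u H (s j)) = if v ≠ 0 then 3 else 0 := by
      unfold hammingWt
      by_cases hvz : v = 0
      · simp [hconst, hvz]
      · simp [hconst, hvz]
    rcases hw with h1 | h1 <;> rw [hham] at h1 <;> split_ifs at h1 <;> omega
  have hcard : (Finset.univ : Finset (Fin n)).card ≤
      2 * ((Finset.univ : Finset (Fin n)).image f).card :=
    Finset.card_le_mul_card_image (f := f) Finset.univ 2 hfib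
  -- image avoids 0
  have himg : (Finset.univ : Finset (Fin n)).image f ⊆
      (Finset.univ : Finset (Fin m → ZMod 2)).erase 0 := by
    intro a ha
    obtain ⟨j, _, rfl⟩ := Finset.mem_image.mp ha
    refine Finset.mem_erase.mpr ⟨?_, Finset.mem_univ _⟩
    obtain ⟨i, hi⟩ := hcol j
    intro h0
    exact hi (congrFun h0 i)
  have hcard2 : ((Finset.univ : Finset (Fin n)).image f).card ≤ 2 ^ m - 1 := by
    have := Finset.card_le_card himg
    have hC : ((Finset.univ : Finset (Fin m → ZMod 2)).erase 0).card = 2 ^ m - 1 := by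
      rw [Finset.card_erase_of_mem (Finset.mem_univ _), Finset.card_univ]
      simp [Fintype.card_fun]
    omega
  simpa using hcard.trans (by omega : 2 * ((Finset.univ : Finset (Fin n)).image f).card ≤ 2 * (2 ^ m - 1))
end

section
/- Let C have m×n parity-check matrix H with no all-zero column and n = 2(2^m−1). Then C is 3-combinable if and only if every nonzero m-tuple appears exactly twice as a column of H. -/
open Matrix

lemma zmod2_cases : ∀ x : ZMod 2, x = 0 ∨ x = 1 := by decide

lemma wt3_iff (v : Fin 3 → ZMod 2) :
    (hammingWt v = 1 ∨ hammingWt v = 2) ↔ ¬(v 0 = v 1 ∧ v 1 = v 2) := by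
  have h : hammingWt v = ((if v 0 ≠ 0 then 1 else 0) + if v 1 ≠ 0 then 1 else 0)
      + (if v 2 ≠ 0 then 1 else 0) := by
    rw [hammingWt, Finset.card_filter, Fin.sum_univ_three]
  rcases zmod2_cases (v 0) with h0 | h0 <;> rcases zmod2_cases (v 1) with h1 | h1 <;>
    rcases zmod2_cases (v 2) with h2 | h2 <;> simp [h, h0, h1, h2]

lemma vecMul_single' {m n : ℕ} (H : Matrix (Fin m) (Fin n) (ZMod 2)) (i0 : Fin m) (j : Fin n) :
    vecMul (Pi.single i0 1) H j = H i0 j := by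
  have : vecMul (Pi.single i0 (1:ZMod 2)) H j
      = ∑ i, (Pi.single i0 (1:ZMod 2) : Fin m → ZMod 2) i * H i j := by
    simp [vecMul, dotProduct]
  rw [this, Finset.sum_eq_single i0] <;> simp +contextual [Pi.single_apply]

lemma vecMul_col_eq {m n : ℕ} (H : Matrix (Fin m) (Fin n) (ZMod 2)) (u : Fin m → ZMod 2)
    {j1 j2 : Fin n} (h : (fun i => H i j1) = (fun i => H i j2)) :
    vecMul u H j1 = vecMul u H j2 := by
  have h1 : vecMul u H j1 = ∑ i, u i * H i j1 := by simp [vecMul, dotProduct]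
  have h2 : vecMul u H j2 = ∑ i, u i * H i j2 := by simp [vecMul, dotProduct]
  rw [h1, h2]
  exact Finset.sum_congr rfl fun i _ => by rw [congrFun h i]

/-- For `n = 2 * (2^m − 1)` and no all-zero column: `C` is 3-combinable iff every
nonzero `m`-tuple appears exactly twice as a column of `H`. -/
theorem stmt_3 (m n : ℕ) (H : Matrix (Fin m) (Fin n) (ZMod 2))
    (hcol : NoZeroColumn H) (hn : n = 2 * (2 ^ m - 1)) :
    Combinable m n 3 H ↔
      ∀ v : Fin m → ZMod 2, v ≠ 0 →
        (Finset.univ.filter fun j : Fin n => (fun i => H i j) = v).card = 2 := by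
  have colmem : ∀ j : Fin n, (fun i => H i j) ≠ (0 : Fin m → ZMod 2) := by
    intro j h
    obtain ⟨i, hi⟩ := hcol j
    exact hi (congrFun h i)
  constructor
  · intro hc v hv
    have hle : ∀ w : Fin m → ZMod 2,
        (Finset.univ.filter fun j : Fin n => (fun i => H i j) = w).card ≤ 2 := by
      intro w
      by_contra hgt
      push_neg at hgt
      rw [Finset.two_lt_card_iff] at hgt
      obtain ⟨a, b, c, ha, hb, hc', hab, hac, hbc⟩ := hgt
      simp only [Finset.mem_filter, Finset.mem_univ, true_and] at ha hb hc'
      have hinj : Function.Injective (![a, b, c] : Fin 3 → Fin n) := by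
        intro x y hxy
        fin_cases x <;> fin_cases y <;> simp_all
      obtain ⟨u, hu, hw⟩ := hc ![a, b, c] hinj
      rw [wt3_iff] at hw
      exact hw ⟨vecMul_col_eq H u (ha.trans hb.symm), vecMul_col_eq H u (hb.trans hc'.symm)⟩
    have hsum : ∑ w ∈ Finset.univ.filter (fun w : Fin m → ZMod 2 => w ≠ 0),
        (Finset.univ.filter fun j : Fin n => (fun i => H i j) = w).card = n := by
      have := Finset.card_eq_sum_card_fiberwise (s := (Finset.univ : Finset (Fin n)))
        (t := Finset.univ.filter fun w : Fin m → ZMod 2 => w ≠ 0)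
        (f := fun j => fun i => H i j) (fun j _ => by simp [colmem j])
      simpa using this.symm
    have hcard : (Finset.univ.filter fun w : Fin m → ZMod 2 => w ≠ 0).card = 2 ^ m - 1 := by
      rw [Finset.filter_ne', Finset.card_erase_of_mem (Finset.mem_univ _), Finset.card_univ]
      simp
    by_contra h2
    have hlt : (Finset.univ.filter fun j : Fin n => (fun i => H i j) = v).card < 2 :=
      lt_of_le_of_ne (hle v) h2
    have hvmem : v ∈ Finset.univ.filter (fun w : Fin m → ZMod 2 => w ≠ 0) := by simp [hv]
    have hstrict := Finset.sum_lt_sum (g := fun _ => 2) (fun w _ => hle w) ⟨v, hvmem, hlt⟩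
    rw [hsum, Finset.sum_const, hcard, smul_eq_mul] at hstrict
    omega
  · intro hcnt s hinj
    have hne : ¬((fun i => H i (s 0)) = (fun i => H i (s 1)) ∧
        (fun i => H i (s 0)) = (fun i => H i (s 2))) := by
      rintro ⟨h01, h02⟩
      have hv := hcnt (fun i => H i (s 0)) (colmem (s 0))
      have hsub : ({s 0, s 1, s 2} : Finset (Fin n)) ⊆
          Finset.univ.filter fun j => (fun i => H i j) = (fun i => H i (s 0)) := by
        intro j hj
        simp only [Finset.mem_insert, Finset.mem_singleton] at hj
        rcases hj with rfl | rfl | rfl <;> simp [h01.symm, h02.symm]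
      have h3 : ({s 0, s 1, s 2} : Finset (Fin n)).card = 3 := by
        rw [Finset.card_insert_of_notMem, Finset.card_insert_of_notMem,
          Finset.card_singleton]
        · simp [hinj.ne (show (1:Fin 3) ≠ 2 by decide)]
        · simp [hinj.ne (show (0:Fin 3) ≠ 1 by decide),
            hinj.ne (show (0:Fin 3) ≠ 2 by decide)]
      have := Finset.card_le_card hsub
      omega
    have hcases : (fun i => H i (s 0)) ≠ (fun i => H i (s 1)) ∨
        (fun i => H i (s 0)) ≠ (fun i => H i (s 2)) := by tauto
    rcases hcases with hne' | hne'
    · obtain ⟨i0, hi0⟩ := Function.ne_iff.mp hne'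
      refine ⟨Pi.single i0 1, ?_, ?_⟩
      · intro h
        have := congrFun h i0
        simp [Pi.single_eq_same] at this
      · rw [wt3_iff]
        simp only [vecMul_single']
        rintro ⟨h01, -⟩
        exact hi0 h01
    · obtain ⟨i0, hi0⟩ := Function.ne_iff.mp hne'
      refine ⟨Pi.single i0 1, ?_, ?_⟩
      · intro h
        have := congrFun h i0
        simp [Pi.single_eq_same] at this
      · rw [wt3_iff]
        simp only [vecMul_single']
        rintro ⟨h01, h12⟩
        exact hi0 (h01.trans h12)
end

section
/- If a binary linear code C with m×n parity-check matrix H (no all-zero columns) is 4-combinable, then n ≤ 3(2^m − 1). -/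
open Matrix

/-- If `C` (no all-zero column) is 4-combinable, then `n ≤ 3 * (2^m − 1)`. -/
theorem stmt_5 (m n : ℕ) (H : Matrix (Fin m) (Fin n) (ZMod 2))
    (hcol : NoZeroColumn H) (hcomb : Combinable m n 4 H) :
    n ≤ 3 * (2 ^ m - 1) := by
  classical
  set f : Fin n → (Fin m → ZMod 2) := fun j i => H i j with hf
  -- each fiber of f has at most 3 elements
  have key : ∀ v ∈ Finset.univ.image f,
      (Finset.univ.filter fun j : Fin n => f j = v).card ≤ 3 := by
    intro v _
    by_contra hlt
    push_neg at hlt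
    have h4 : 4 ≤ (Finset.univ.filter fun j : Fin n => f j = v).card := hlt
    obtain ⟨t, hts, htc⟩ := Finset.exists_subset_card_eq h4
    set s : Fin 4 → Fin n := fun j => t.orderEmbOfFin htc j with hsdef
    have hs : Function.Injective s := (t.orderEmbOfFin htc).injective
    obtain ⟨u, hu, hw⟩ := hcomb s hs
    have hcoleq : ∀ j : Fin 4, f (s j) = v := by
      intro j
      have hmem : s j ∈ t := t.orderEmbOfFin_mem htc j
      have := hts hmem
      simpa using this
    set c : ZMod 2 := ∑ i, u i * v i with hc
    have hval : ∀ j : Fin 4, vecMul u H (s j) = c := by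
      intro j
      have h1 : ∀ i, H i (s j) = v i := fun i => congrFun (hcoleq j) i
      simp [Matrix.vecMul, dotProduct, h1, hc]
    have hconst : (fun j : Fin 4 => vecMul u H (s j)) = fun _ => c := by
      funext j; exact hval j
    rw [hconst] at hw
    by_cases hc0 : c = 0
    · have : hammingWt (fun _ : Fin 4 => c) = 0 := by
        simp [hammingWt, hc0]
      rw [this] at hw
      omega
    · have : hammingWt (fun _ : Fin 4 => c) = 4 := by
        simp [hammingWt, hc0]
      rw [this] at hw
      omega
  have hcard : (Finset.univ : Finset (Fin n)).card ≤
      3 * ((Finset.univ : Finset (Fin n)).image f).card :=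
    Finset.card_le_mul_card_image Finset.univ 3 key
  have himg : ((Finset.univ : Finset (Fin n)).image f) ⊆
      (Finset.univ : Finset (Fin m → ZMod 2)).erase 0 := by
    intro v hv
    simp only [Finset.mem_image] at hv
    obtain ⟨j, _, rfl⟩ := hv
    obtain ⟨i, hi⟩ := hcol j
    refine Finset.mem_erase.mpr ⟨?_, Finset.mem_univ _⟩
    intro h0
    exact hi (congrFun h0 i)
  have hcard2 : ((Finset.univ : Finset (Fin n)).image f).card ≤ 2 ^ m - 1 := by
    calc ((Finset.univ : Finset (Fin n)).image f).card
        ≤ ((Finset.univ : Finset (Fin m → ZMod 2)).erase 0).card :=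
          Finset.card_le_card himg
      _ = 2 ^ m - 1 := by
          rw [Finset.card_erase_of_mem (Finset.mem_univ _)]
          simp [Finset.card_univ]
  calc n = (Finset.univ : Finset (Fin n)).card := by simp
    _ ≤ 3 * ((Finset.univ : Finset (Fin n)).image f).card := hcard
    _ ≤ 3 * (2 ^ m - 1) := by omega
end

section
/- Let C have m×n parity-check matrix H with no all-zero column and n = 3(2^m−1). Then C is 4-combinable if and only if every nonzero m-tuple appears exactly three times as a column of H. -/
open Matrix

open Finset


lemma zmod2_cases_s6 (r : ZMod 2) : r = 0 ∨ r = 1 := by revert r; decide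

lemma zmod2_ne_zero {r : ZMod 2} (h : r ≠ 0) : r = 1 := by
  rcases zmod2_cases_s6 r with h0 | h1; exact absurd h0 h; exact h1

/-- Dual separation: a functional (as a vector) vanishing on `a, b` and equal to `1` on `c`. -/
lemma exists_dual_vec {m : ℕ} (a b c : Fin m → ZMod 2)
    (h : c ∉ Submodule.span (ZMod 2) ({a, b} : Set (Fin m → ZMod 2))) :
    ∃ u : Fin m → ZMod 2, u ⬝ᵥ a = 0 ∧ u ⬝ᵥ b = 0 ∧ u ⬝ᵥ c = 1 := by
  set p := Submodule.span (ZMod 2) ({a, b} : Set (Fin m → ZMod 2)) with hp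
  have hc : p.mkQ c ≠ 0 := by
    simpa [Submodule.Quotient.mk_eq_zero] using h
  have := (Module.forall_dual_apply_eq_zero_iff (ZMod 2) (p.mkQ c)).not.mpr hc
  push_neg at this
  obtain ⟨φ, hφ⟩ := this
  set f : (Fin m → ZMod 2) →ₗ[ZMod 2] ZMod 2 := φ.comp p.mkQ with hf
  have hfa : f a = 0 := by
    have : a ∈ p := Submodule.subset_span (by simp)
    simp [hf, (Submodule.Quotient.mk_eq_zero p).mpr this]
  have hfb : f b = 0 := by
    have : b ∈ p := Submodule.subset_span (by simp)
    simp [hf, (Submodule.Quotient.mk_eq_zero p).mpr this]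
  have hfc : f c = 1 := zmod2_ne_zero hφ
  refine ⟨fun i => f fun j => if i = j then 1 else 0, ?_, ?_, ?_⟩ <;>
  · rw [show ∀ x : Fin m → ZMod 2,
        (fun i => f fun j => if i = j then 1 else 0) ⬝ᵥ x = f x from ?_]
    · assumption
    · intro x
      rw [LinearMap.pi_apply_eq_sum_univ f x]
      simp [dotProduct, mul_comm]

lemma exists_dual_pair {m : ℕ} (a b : Fin m → ZMod 2) (ha : a ≠ 0) (hab : a ≠ b) :
    ∃ u : Fin m → ZMod 2, u ⬝ᵥ a = 1 ∧ u ⬝ᵥ b = 0 := by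
  have h : a ∉ Submodule.span (ZMod 2) ({b, b} : Set (Fin m → ZMod 2)) := by
    intro hmem
    rw [Submodule.mem_span_pair] at hmem
    obtain ⟨p, q, hpq⟩ := hmem
    rcases zmod2_cases_s6 p with rfl | rfl <;> rcases zmod2_cases_s6 q with rfl | rfl
    · exact ha (by rw [← hpq]; simp)
    · exact hab (by rw [← hpq]; simp)
    · exact hab (by rw [← hpq]; simp)
    · refine ha (by rw [← hpq]; rw [one_smul]; ext i; simp [CharTwo.add_self_eq_zero])
  obtain ⟨u, h1, _, h3⟩ := exists_dual_vec b b a h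
  exact ⟨u, h3, h1⟩

def cnt4 {m : ℕ} (u a b x y : Fin m → ZMod 2) : ℕ :=
  (if u ⬝ᵥ a ≠ 0 then 1 else 0) + (if u ⬝ᵥ b ≠ 0 then 1 else 0) +
  (if u ⬝ᵥ x ≠ 0 then 1 else 0) + (if u ⬝ᵥ y ≠ 0 then 1 else 0)

lemma key {m : ℕ} (a b x y : Fin m → ZMod 2) (ha : a ≠ 0) (hb : b ≠ 0)
    (hx : x ≠ 0) (hy : y ≠ 0) (hab : a ≠ b) :
    ∃ u : Fin m → ZMod 2, cnt4 u a b x y = 1 ∨ cnt4 u a b x y = 2 := by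
  classical
  by_cases hxs : x ∈ Submodule.span (ZMod 2) ({a, b} : Set (Fin m → ZMod 2))
  · by_cases hys : y ∈ Submodule.span (ZMod 2) ({a, b} : Set (Fin m → ZMod 2))
    · -- both in span: x, y ∈ {a, b, a+b}
      have hmem : ∀ z : Fin m → ZMod 2, z ≠ 0 →
          z ∈ Submodule.span (ZMod 2) ({a, b} : Set (Fin m → ZMod 2)) →
          z = a ∨ z = b ∨ z = a + b := by
        intro z hz hzs
        rw [Submodule.mem_span_pair] at hzs
        obtain ⟨p, q, hpq⟩ := hzs
        rcases zmod2_cases_s6 p with rfl | rfl <;> rcases zmod2_cases_s6 q with rfl | rfl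
        · exact absurd (by rw [← hpq]; simp) hz
        · right; left; rw [← hpq]; simp
        · left; rw [← hpq]; simp
        · right; right; rw [← hpq]; simp
      obtain ⟨u1, h1a, h1b⟩ := exists_dual_pair a b ha hab
      obtain ⟨u2, h2b, h2a⟩ := exists_dual_pair b a hb hab.symm
      have h1ab : u1 ⬝ᵥ (a + b) = 1 := by rw [dotProduct_add, h1a, h1b, add_zero]
      have h2ab : u2 ⬝ᵥ (a + b) = 1 := by rw [dotProduct_add, h2a, h2b, zero_add]
      have h3a : (u1 + u2) ⬝ᵥ a = 1 := by rw [add_dotProduct, h1a, h2a, add_zero]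
      have h3b : (u1 + u2) ⬝ᵥ b = 1 := by rw [add_dotProduct, h1b, h2b, zero_add]
      have h3ab : (u1 + u2) ⬝ᵥ (a + b) = 0 := by
        rw [add_dotProduct, h1ab, h2ab]; decide
      rcases hmem x hx hxs with rfl | rfl | rfl <;>
        rcases hmem y hy hys with rfl | rfl | rfl
      · exact ⟨u2, by simp [cnt4, h2a, h2b]⟩
      · exact ⟨u1, by simp [cnt4, h1a, h1b]⟩
      · exact ⟨u2, by simp [cnt4, h2a, h2b, h2ab]⟩
      · exact ⟨u1, by simp [cnt4, h1a, h1b]⟩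
      · exact ⟨u1, by simp [cnt4, h1a, h1b]⟩
      · exact ⟨u1, by simp [cnt4, h1a, h1b, h1ab]⟩
      · exact ⟨u2, by simp [cnt4, h2a, h2b, h2ab]⟩
      · exact ⟨u1, by simp [cnt4, h1a, h1b, h1ab]⟩
      · exact ⟨u1 + u2, by simp [cnt4, h3a, h3b, h3ab]⟩
    · obtain ⟨u, hua, hub, huy⟩ := exists_dual_vec a b y hys
      refine ⟨u, ?_⟩
      unfold cnt4
      rw [hua, hub, huy]
      by_cases hx' : u ⬝ᵥ x = 0 <;> simp [hx']
  · obtain ⟨u, hua, hub, hux⟩ := exists_dual_vec a b x hxs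
    refine ⟨u, ?_⟩
    unfold cnt4
    rw [hua, hub, hux]
    by_cases hy' : u ⬝ᵥ y = 0 <;> simp [hy']

lemma hammingWt_four (v : Fin 4 → ZMod 2) :
    hammingWt v = (if v 0 ≠ 0 then 1 else 0) + (if v 1 ≠ 0 then 1 else 0) +
      (if v 2 ≠ 0 then 1 else 0) + (if v 3 ≠ 0 then 1 else 0) := by
  rw [hammingWt, Finset.card_filter, Fin.sum_univ_four]

lemma vecMul_col {m n : ℕ} (H : Matrix (Fin m) (Fin n) (ZMod 2))
    (u : Fin m → ZMod 2) (j : Fin n) :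
    vecMul u H j = u ⬝ᵥ (fun i => H i j) := rfl

/-- For `n = 3 * (2^m − 1)` and no all-zero column: `C` is 4-combinable iff every
nonzero `m`-tuple appears exactly three times as a column of `H`. -/
theorem stmt_6 (m n : ℕ) (H : Matrix (Fin m) (Fin n) (ZMod 2))
    (hcol : NoZeroColumn H) (hn : n = 3 * (2 ^ m - 1)) :
    Combinable m n 4 H ↔
      ∀ v : Fin m → ZMod 2, v ≠ 0 →
        (Finset.univ.filter fun j : Fin n => (fun i => H i j) = v).card = 3 := by
  classical
  set col : Fin n → (Fin m → ZMod 2) := fun j i => H i j with hcoldef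
  have hcolne : ∀ j, col j ≠ 0 := by
    intro j hj
    obtain ⟨i, hi⟩ := hcol j
    exact hi (congrFun hj i)
  set cnt : (Fin m → ZMod 2) → ℕ :=
    fun v => (Finset.univ.filter fun j : Fin n => (fun i => H i j) = v).card with hcnt
  constructor
  · -- Combinable → counts are 3
    intro hcomb v hv
    -- step 1: every nonzero vector appears at most 3 times
    have hle : ∀ w : Fin m → ZMod 2, w ≠ 0 → cnt w ≤ 3 := by
      intro w hw
      by_contra hgt
      push_neg at hgt
      simp only [hcnt] at hgt
      obtain ⟨t, hts, htc⟩ := Finset.exists_subset_card_eq (n := 4) (by omega :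
        4 ≤ (Finset.univ.filter fun j : Fin n => (fun i => H i j) = w).card)
      have hiso := t.orderIsoOfFin htc
      set s : Fin 4 → Fin n := fun i => (hiso i : Fin n) with hs
      have hsinj : Function.Injective s :=
        fun i j hij => hiso.injective (Subtype.ext hij)
      obtain ⟨u, hu0, hu⟩ := hcomb s hsinj
      have hcw : ∀ i : Fin 4, (fun i' => H i' (s i)) = w := by
        intro i
        have := hts (hiso i).2
        simpa using (Finset.mem_filter.mp this).2
      have hval : ∀ i : Fin 4, vecMul u H (s i) = u ⬝ᵥ w := by
        intro i; rw [vecMul_col, hcw i]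
      rw [hammingWt_four, hval 0, hval 1, hval 2, hval 3] at hu
      by_cases h0 : u ⬝ᵥ w = 0 <;> simp [h0] at hu
    -- step 2: total count
    have htotal : ∑ w : Fin m → ZMod 2, cnt w = n := by
      have := Finset.card_eq_sum_card_fiberwise (s := (Finset.univ : Finset (Fin n)))
        (t := (Finset.univ : Finset (Fin m → ZMod 2)))
        (f := fun j => (fun i => H i j)) (fun x _ => Finset.mem_univ _)
      rw [Finset.card_univ, Fintype.card_fin] at this
      rw [hcnt, ← this]
    have hS : (Finset.univ.filter fun w : Fin m → ZMod 2 => w ≠ 0).card = 2 ^ m - 1 := by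
      rw [Finset.filter_ne', Finset.card_erase_of_mem (Finset.mem_univ _), Finset.card_univ]
      simp [Fintype.card_fun]
    have hcnt0 : cnt 0 = 0 := by
      rw [hcnt]
      simp only
      rw [Finset.card_eq_zero, Finset.filter_eq_empty_iff]
      intro j _
      exact hcolne j
    have hsplit : ∑ w ∈ Finset.univ.filter (fun w : Fin m → ZMod 2 => w ≠ 0), cnt w = n := by
      rw [Finset.sum_subset (Finset.filter_subset _ _) ?_, htotal]
      intro w _ hw
      have hw0 : w = 0 := by simpa using hw
      rw [hw0, hcnt0]
    by_contra hne3
    have hvS : v ∈ Finset.univ.filter (fun w : Fin m → ZMod 2 => w ≠ 0) := by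
      simp [hv]
    have hlt : ∑ w ∈ Finset.univ.filter (fun w : Fin m → ZMod 2 => w ≠ 0), cnt w <
        ∑ _w ∈ Finset.univ.filter (fun w : Fin m → ZMod 2 => w ≠ 0), 3 :=
      Finset.sum_lt_sum (fun w hw => hle w (Finset.mem_filter.mp hw).2)
        ⟨v, hvS, lt_of_le_of_ne (hle v hv) hne3⟩
    rw [hsplit, Finset.sum_const, smul_eq_mul, hS] at hlt
    omega
  · -- counts are 3 → Combinable
    intro hcount s hsinj
    set c : Fin 4 → (Fin m → ZMod 2) := fun i => col (s i) with hc
    have hcne : ∀ i, c i ≠ 0 := fun i => hcolne (s i)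
    -- not all columns equal
    have hpair : ∃ j : Fin 4, c j ≠ c 0 := by
      by_contra hall
      push_neg at hall
      have himg : (Finset.univ : Finset (Fin 4)).image s ⊆
          Finset.univ.filter fun j : Fin n => (fun i => H i j) = c 0 := by
        intro j hj
        obtain ⟨i, _, rfl⟩ := Finset.mem_image.mp hj
        exact Finset.mem_filter.mpr ⟨Finset.mem_univ _, hall i⟩
      have h4 : ((Finset.univ : Finset (Fin 4)).image s).card = 4 := by
        rw [Finset.card_image_of_injective _ hsinj, Finset.card_univ, Fintype.card_fin]
      have := Finset.card_le_card himg
      rw [h4, hcount (c 0) (hcne 0)] at this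
      omega
    obtain ⟨j, hj⟩ := hpair
    have hgoal : ∀ u : Fin m → ZMod 2,
        hammingWt (fun i => vecMul u H (s i)) =
        (if u ⬝ᵥ c 0 ≠ 0 then 1 else 0) + (if u ⬝ᵥ c 1 ≠ 0 then 1 else 0) +
        (if u ⬝ᵥ c 2 ≠ 0 then 1 else 0) + (if u ⬝ᵥ c 3 ≠ 0 then 1 else 0) := by
      intro u
      rw [hammingWt_four]
      rfl
    have huneq : ∀ u : Fin m → ZMod 2, ∀ i : Fin 4, u ⬝ᵥ c i ≠ 0 → u ≠ 0 := by
      intro u i hui h0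
      subst h0
      exact hui (zero_dotProduct _)
    have finish : ∀ u : Fin m → ZMod 2,
        ((if u ⬝ᵥ c 0 ≠ 0 then 1 else 0) + (if u ⬝ᵥ c 1 ≠ 0 then 1 else 0) +
         (if u ⬝ᵥ c 2 ≠ 0 then 1 else 0) + (if u ⬝ᵥ c 3 ≠ 0 then 1 else 0) = 1 ∨
         (if u ⬝ᵥ c 0 ≠ 0 then 1 else 0) + (if u ⬝ᵥ c 1 ≠ 0 then 1 else 0) +
         (if u ⬝ᵥ c 2 ≠ 0 then 1 else 0) + (if u ⬝ᵥ c 3 ≠ 0 then 1 else 0) = 2) →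
        ∃ u' : Fin m → ZMod 2, u' ≠ 0 ∧
          (hammingWt (fun i => vecMul u' H (s i)) = 1 ∨
           hammingWt (fun i => vecMul u' H (s i)) = 2) := by
      intro u hcases
      refine ⟨u, ?_, ?_⟩
      · rintro rfl
        rcases hcases with h | h <;> simp [zero_dotProduct] at h
      · rw [hgoal u]; exact hcases
    fin_cases j
    · exact absurd rfl hj
    · obtain ⟨u, hu⟩ := key (c 0) (c 1) (c 2) (c 3) (hcne 0) (hcne 1) (hcne 2) (hcne 3)
        (Ne.symm hj)
      exact finish u (by unfold cnt4 at hu; omega)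
    · obtain ⟨u, hu⟩ := key (c 0) (c 2) (c 1) (c 3) (hcne 0) (hcne 2) (hcne 1) (hcne 3)
        (Ne.symm hj)
      exact finish u (by unfold cnt4 at hu; omega)
    · obtain ⟨u, hu⟩ := key (c 0) (c 3) (c 1) (c 2) (hcne 0) (hcne 3) (hcne 1) (hcne 2)
        (Ne.symm hj)
      exact finish u (by unfold cnt4 at hu; omega)
end

section
/- Let C have minimum distance ≥ 3 and m×n parity-check matrix H with n = 2^m − 1. Then C is 5-combinable if and only if the columns of H are exactly all 2^m − 1 nonzero m-tuples, each appearing once (i.e., C is the Hamming code). -/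
open Matrix

lemma hammingWt_eq_sum {e : ℕ} (v : Fin e → ZMod 2) :
    hammingWt v = ∑ j, if v j ≠ 0 then 1 else 0 := by
  rw [hammingWt, Finset.card_filter]

lemma hammingWt_ge_three {e : ℕ} (v : Fin e → ZMod 2) (h0 : v ≠ 0)
    (h1 : hammingWt v ≠ 1) (h2 : hammingWt v ≠ 2) : 3 ≤ hammingWt v := by
  have : hammingWt v ≠ 0 := by
    intro h
    apply h0
    have h' := Finset.filter_eq_empty_iff.mp (Finset.card_eq_zero.mp h)
    funext j
    have := h' (Finset.mem_univ j)
    simpa using this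
  omega

lemma seven_ind_le_four (x y z : ZMod 2) :
    (if x ≠ 0 then (1:ℕ) else 0) + (if y ≠ 0 then (1:ℕ) else 0) + (if z ≠ 0 then (1:ℕ) else 0)
    + (if x + y ≠ 0 then (1:ℕ) else 0) + (if x + z ≠ 0 then (1:ℕ) else 0)
    + (if y + z ≠ 0 then (1:ℕ) else 0) + (if x + y + z ≠ 0 then (1:ℕ) else 0) ≤ 4 := by
  revert x y z; decide

lemma add_eq_zero_iff_eq {e : ℕ} (v w : Fin e → ZMod 2) : v + w = 0 ↔ v = w := by
  constructor
  · intro h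
    funext j
    have h2 := congrFun h j
    have : ∀ a b : ZMod 2, a + b = 0 → a = b := by decide
    exact this (v j) (w j) h2
  · intro h; subst h; funext j
    have : ∀ a : ZMod 2, a + a = 0 := by decide
    exact this (v j)

/-- For minimum distance ≥ 3 (columns nonzero, pairwise distinct) and
`n = 2^m − 1`: `C` is 5-combinable iff the columns of `H` are exactly all
nonzero `m`-tuples, each appearing once (i.e. `C` is the Hamming code). -/
theorem stmt_9 (m n : ℕ) (H : Matrix (Fin m) (Fin n) (ZMod 2))
    (hcol : NoZeroColumn H)
    (hdist : ∀ j j' : Fin n, j ≠ j' → (fun i => H i j) ≠ (fun i => H i j'))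
    (hn : n = 2 ^ m - 1) :
    Combinable m n 5 H ↔
      ∀ v : Fin m → ZMod 2, v ≠ 0 → ∃! j : Fin n, (fun i => H i j) = v := by
  constructor
  · -- RHS holds from the hypotheses alone
    intro _ v hv
    have hmap : ∀ j : Fin n, (fun i => H i j) ≠ (0 : Fin m → ZMod 2) := by
      intro j h
      obtain ⟨i, hi⟩ := hcol j
      exact hi (congrFun h i)
    have ginj : Function.Injective (fun j : Fin n => (⟨fun i => H i j, hmap j⟩ :
        {w : Fin m → ZMod 2 // w ≠ 0})) := by
      intro j j' h
      by_contra hne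
      exact hdist j j' hne (congrArg Subtype.val h)
    have hcard : Fintype.card {w : Fin m → ZMod 2 // w ≠ 0} = 2 ^ m - 1 := by
      have h1 := Fintype.card_subtype_compl (fun w : Fin m → ZMod 2 => w = 0)
      have h2 : Fintype.card {w : Fin m → ZMod 2 // w = 0} = 1 :=
        Fintype.card_subtype_eq (0 : Fin m → ZMod 2)
      have h3 : Fintype.card (Fin m → ZMod 2) = 2 ^ m := by simp
      calc Fintype.card {w : Fin m → ZMod 2 // w ≠ 0}
          = Fintype.card {w : Fin m → ZMod 2 // ¬ w = 0} := rfl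
        _ = 2 ^ m - 1 := by rw [h1, h2, h3]
    have gbij : Function.Bijective (fun j : Fin n => (⟨fun i => H i j, hmap j⟩ :
        {w : Fin m → ZMod 2 // w ≠ 0})) := by
      refine (Fintype.bijective_iff_injective_and_card _).2 ⟨ginj, ?_⟩
      rw [hcard, Fintype.card_fin, hn]
    obtain ⟨j, hj⟩ := gbij.2 ⟨v, hv⟩
    refine ⟨j, congrArg Subtype.val hj, ?_⟩
    intro j' hj'
    apply ginj
    rw [hj]
    exact Subtype.ext hj'
  · -- Combinability holds from the hypotheses alone
    intro _ s hs
    by_contra hcon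
    push_neg at hcon
    set φ : (Fin m → ZMod 2) → (Fin 5 → ZMod 2) := fun u j => ∑ i, u i * H i (s j) with hφ
    have hfun : ∀ u, (fun j => vecMul u H (s j)) = φ u := by
      intro u; funext j; simp [hφ, vecMul, dotProduct]
    have φ0 : φ 0 = 0 := by funext j; simp [hφ]
    have φadd : ∀ u u', φ (u + u') = φ u + φ u' := by
      intro u u'
      funext j
      simp [hφ, add_mul, Finset.sum_add_distrib]
    have key : ∀ u, φ u ≠ 0 → 3 ≤ hammingWt (φ u) := by
      intro u hu
      have hune : u ≠ 0 := by rintro rfl; exact hu φ0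
      have h := hcon u hune
      rw [hfun u] at h
      exact hammingWt_ge_three _ hu h.1 h.2
    have sep : ∀ j j' : Fin 5, j ≠ j' → ∃ u, φ u j ≠ φ u j' := by
      intro j j' hne
      have h1 : (fun i => H i (s j)) ≠ (fun i => H i (s j')) :=
        hdist _ _ (fun h => hne (hs h))
      have h2 : ∃ i, H i (s j) ≠ H i (s j') := by
        by_contra h
        push_neg at h
        exact h1 (funext h)
      obtain ⟨i, hi⟩ := h2
      refine ⟨Pi.single i 1, ?_⟩
      have e1 : ∀ jj : Fin 5, φ (Pi.single i 1) jj = H i (s jj) := by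
        intro jj
        simp [hφ, Pi.single_apply, ite_mul]
      rw [e1, e1]
      exact hi
    by_cases hex : ∃ p q : Fin 5 → ZMod 2, ∀ u, φ u = 0 ∨ φ u = p ∨ φ u = q ∨ φ u = p + q
    · obtain ⟨p, q, hall⟩ := hex
      have hni : ¬ Function.Injective (fun j : Fin 5 => (p j, q j)) := by
        intro hinj
        have := Fintype.card_le_of_injective _ hinj
        simp at this
      rw [Function.not_injective_iff] at hni
      obtain ⟨j, j', heq, hne⟩ := hni
      have hp : p j = p j' := congrArg Prod.fst heq
      have hq : q j = q j' := congrArg Prod.snd heq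
      obtain ⟨u, hu⟩ := sep j j' hne
      rcases hall u with h | h | h | h <;> rw [h] at hu <;> simp [hp, hq] at hu
    · push_neg at hex
      obtain ⟨u0, hp0, -, -, -⟩ := hex 0 0
      obtain ⟨u1, hq0, hq1, -, -⟩ := hex (φ u0) (φ u0)
      obtain ⟨u2, hr0, hr1, hr2, hr3⟩ := hex (φ u0) (φ u1)
      set p := φ u0 with hpd
      set q := φ u1 with hqd
      set r := φ u2 with hrd
      have hpq : p + q ≠ 0 := fun h => hq1 ((add_eq_zero_iff_eq q p).mp
        (by rwa [add_comm] at h))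
      have hpr : p + r ≠ 0 := fun h => hr1 ((add_eq_zero_iff_eq p r).mp h).symm
      have hqr : q + r ≠ 0 := fun h => hr2 ((add_eq_zero_iff_eq q r).mp h).symm
      have hpqr : p + q + r ≠ 0 := fun h => hr3 ((add_eq_zero_iff_eq (p + q) r).mp h).symm
      have w1 : 3 ≤ hammingWt p := key u0 hp0
      have w2 : 3 ≤ hammingWt q := key u1 hq0
      have w3 : 3 ≤ hammingWt r := key u2 hr0
      have e4 : φ (u0 + u1) = p + q := by rw [φadd]
      have e5 : φ (u0 + u2) = p + r := by rw [φadd]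
      have e6 : φ (u1 + u2) = q + r := by rw [φadd]
      have e7 : φ (u0 + u1 + u2) = p + q + r := by rw [φadd, φadd]
      have w4 : 3 ≤ hammingWt (p + q) := e4 ▸ key _ (by rw [e4]; exact hpq)
      have w5 : 3 ≤ hammingWt (p + r) := e5 ▸ key _ (by rw [e5]; exact hpr)
      have w6 : 3 ≤ hammingWt (q + r) := e6 ▸ key _ (by rw [e6]; exact hqr)
      have w7 : 3 ≤ hammingWt (p + q + r) := e7 ▸ key _ (by rw [e7]; exact hpqr)
      have upper : hammingWt p + hammingWt q + hammingWt r + hammingWt (p + q)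
          + hammingWt (p + r) + hammingWt (q + r) + hammingWt (p + q + r) ≤ 20 := by
        simp only [hammingWt_eq_sum]
        rw [← Finset.sum_add_distrib, ← Finset.sum_add_distrib, ← Finset.sum_add_distrib,
          ← Finset.sum_add_distrib, ← Finset.sum_add_distrib, ← Finset.sum_add_distrib]
        calc (∑ j : Fin 5, ((if p j ≠ 0 then 1 else 0) + (if q j ≠ 0 then 1 else 0)
              + (if r j ≠ 0 then 1 else 0) + (if (p + q) j ≠ 0 then 1 else 0)
              + (if (p + r) j ≠ 0 then 1 else 0) + (if (q + r) j ≠ 0 then 1 else 0)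
              + (if (p + q + r) j ≠ 0 then 1 else 0)))
            ≤ ∑ _j : Fin 5, 4 := by
              refine Finset.sum_le_sum fun j _ => ?_
              simp only [Pi.add_apply]
              exact seven_ind_le_four (p j) (q j) (r j)
          _ = 20 := by simp
      omega
end

section
/- For any submatrix H_P formed by selecting columns of H_E, if no row of H_P has weight 1 or 2 and H_P has 4 columns with no all-zero column, then the nonzero rows of H_P all equal the all-ones vector (1,1,1,1). -/
open Matrix

lemma aux_wt34 : ∀ a : Fin 4 → ZMod 2, a ≠ 0 → hammingWt a ≠ 1 → hammingWt a ≠ 2 →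
    hammingWt a = 3 ∨ hammingWt a = 4 := by decide

lemma aux_wt4 : ∀ a : Fin 4 → ZMod 2, hammingWt a = 4 → a = fun _ => 1 := by decide

lemma aux_wt3 : ∀ a : Fin 4 → ZMod 2, hammingWt a = 3 → ∃ j, a j = 0 := by decide

lemma aux_sum : ∀ a b : Fin 4 → ZMod 2, ∀ j : Fin 4, a j = 0 → b j ≠ 0 →
    hammingWt a = 3 → (hammingWt b = 3 ∨ hammingWt b = 4) →
    ¬ (hammingWt (a + b) = 3 ∨ hammingWt (a + b) = 4) := by decide

/-- If a 4-column submatrix `H_P` of `H_E` has no all-zero column and no row of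
Hamming weight 1 or 2, then every nonzero row of `H_P` is the all-ones vector. -/
theorem stmt_10 (m n : ℕ) (H : Matrix (Fin m) (Fin n) (ZMod 2))
    (s : Fin 4 → Fin n) (hs : Function.Injective s)
    (hcol : ∀ j : Fin 4, ∃ u : Fin m → ZMod 2, u ≠ 0 ∧ (vecMul u H) (s j) ≠ 0)
    (hw : ∀ u : Fin m → ZMod 2, u ≠ 0 →
      hammingWt (fun j => (vecMul u H) (s j)) ≠ 1 ∧
      hammingWt (fun j => (vecMul u H) (s j)) ≠ 2) :
    ∀ u : Fin m → ZMod 2, u ≠ 0 →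
      (fun j : Fin 4 => (vecMul u H) (s j)) ≠ 0 →
      (fun j : Fin 4 => (vecMul u H) (s j)) = fun _ => 1 := by
  intro u hu hne
  set a : Fin 4 → ZMod 2 := fun j => (vecMul u H) (s j) with ha
  obtain ⟨h1, h2⟩ := hw u hu
  rcases aux_wt34 a hne h1 h2 with h3 | h4
  · -- weight 3 : derive a contradiction
    exfalso
    obtain ⟨j, hj⟩ := aux_wt3 a h3
    obtain ⟨u', hu', hj'⟩ := hcol j
    set b : Fin 4 → ZMod 2 := fun j => (vecMul u' H) (s j) with hb
    have hbne : b ≠ 0 := by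
      intro h0
      apply hj'
      have := congrFun h0 j
      simpa [hb] using this
    obtain ⟨h1', h2'⟩ := hw u' hu'
    have hb34 := aux_wt34 b hbne h1' h2'
    have huu' : u + u' ≠ 0 := by
      intro h0
      have : u' = u := by
        funext i
        have := congrFun h0 i
        have h2 : u i + u' i = 0 := this
        have : u' i = - u i := by linear_combination h2
        rw [this]
        generalize u i = x
        revert x; decide
      rw [this] at hj'
      exact hj' hj
    have hab : (fun j : Fin 4 => (vecMul (u + u') H) (s j)) = a + b := by
      funext k
      simp [ha, hb, add_vecMul, Pi.add_apply]
    obtain ⟨h1s, h2s⟩ := hw (u + u') huu'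
    rw [hab] at h1s h2s
    have habne : a + b ≠ 0 := by
      intro h0
      have := congrFun h0 j
      simp only [Pi.add_apply, Pi.zero_apply, hj, zero_add] at this
      exact hj' this
    have := aux_wt34 (a + b) habne h1s h2s
    exact aux_sum a b j hj hj' h3 hb34 this
  · exact aux_wt4 a h4
end

section
/- Let V be a nonzero linear subspace of GF(2)^5 such that every coordinate is nonzero on some vector of V and no nonzero vector of V has Hamming weight 1 or 2. Then either every nonzero vector of V equals (1,1,1,1,1), or V contains three vectors of weights 4, 3, 3 whose supports pairwise intersect as in {1,2,3,4}, {1,2,5}, {3,4,5} up to coordinate permutation. -/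
set_option maxRecDepth 10000

open Matrix

lemma wtL0 : ∀ v : Fin 5 → ZMod 2, hammingWt v = 0 → v = 0 := by decide
lemma wtL5 : ∀ v : Fin 5 → ZMod 2, hammingWt v = 5 → v = fun _ => 1 := by decide
lemma wtLle : ∀ v : Fin 5 → ZMod 2, hammingWt v ≤ 5 := by decide
lemma wtL3 : ∀ v : Fin 5 → ZMod 2, hammingWt v = 3 → ∃ j, v j = 0 := by decide
lemma wtL4 : ∀ v : Fin 5 → ZMod 2, hammingWt v = 4 → ∃ j, v j = 0 := by decide

lemma wtLB : ∀ v w : Fin 5 → ZMod 2, hammingWt v = 3 → w ≠ v →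
    hammingWt w = 4 ∨ hammingWt (v + w) = 4 ∨
    (hammingWt w = 0 ∨ hammingWt w = 1 ∨ hammingWt w = 2) ∨
    (hammingWt (v + w) = 1 ∨ hammingWt (v + w) = 2) := by decide

lemma wtLD : ∀ a w : Fin 5 → ZMod 2, hammingWt a = 4 → ∀ m : Fin 5, a m = 0 → w m ≠ 0 →
    (hammingWt w = 1 ∨ hammingWt w = 2) ∨
    (hammingWt (a + w) = 1 ∨ hammingWt (a + w) = 2) ∨
    ∃ σ : Equiv.Perm (Fin 5),
      a ∘ σ = ![1, 1, 1, 1, 0] ∧ w ∘ σ = ![1, 1, 0, 0, 1] ∧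
      (a + w) ∘ σ = ![0, 0, 1, 1, 1] := by decide

/-- Let `V ≤ GF(2)^5` be a nonzero subspace with every coordinate nonzero on some
vector of `V` and no nonzero vector of weight 1 or 2. Then either every nonzero
vector of `V` is the all-ones vector, or (up to a coordinate permutation) `V`
contains the three vectors `11110`, `11001`, `00111`. -/
theorem stmt_11 (V : Submodule (ZMod 2) (Fin 5 → ZMod 2))
    (hne : V ≠ ⊥)
    (hcol : ∀ j : Fin 5, ∃ v ∈ V, v j ≠ 0)
    (hw : ∀ v ∈ V, v ≠ 0 → hammingWt v ≠ 1 ∧ hammingWt v ≠ 2) :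
    (∀ v ∈ V, v ≠ 0 → v = fun _ => 1) ∨
    (∃ σ : Equiv.Perm (Fin 5), ∃ a ∈ V, ∃ b ∈ V, ∃ c ∈ V,
      a ∘ σ = ![1, 1, 1, 1, 0] ∧ b ∘ σ = ![1, 1, 0, 0, 1] ∧
      c ∘ σ = ![0, 0, 1, 1, 1]) := by
  by_cases hall : ∀ v ∈ V, v ≠ 0 → v = fun _ => 1
  · exact Or.inl hall
  right
  push_neg at hall
  obtain ⟨v, hv, hv0, hv1⟩ := hall
  -- classify weights of nonzero vectors
  have key : ∀ x, x ∈ V → x ≠ 0 →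
      hammingWt x = 3 ∨ hammingWt x = 4 ∨ x = fun _ => 1 := by
    intro x hx hx0
    have h12 := hw x hx hx0
    have h0 : hammingWt x ≠ 0 := fun h => hx0 (wtL0 x h)
    have h5 : hammingWt x ≤ 5 := wtLle x
    have : hammingWt x = 3 ∨ hammingWt x = 4 ∨ hammingWt x = 5 := by omega
    rcases this with h | h | h
    · exact Or.inl h
    · exact Or.inr (Or.inl h)
    · exact Or.inr (Or.inr (wtL5 x h))
  -- find a weight-4 vector in V
  have ⟨a, ha, ha4⟩ : ∃ a, a ∈ V ∧ hammingWt a = 4 := by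
    rcases key v hv hv0 with h3 | h4 | h5
    · obtain ⟨j, hj⟩ := wtL3 v h3
      obtain ⟨w, hwV, hwj⟩ := hcol j
      have hwv : w ≠ v := fun h => hwj (h ▸ hj)
      have hw0 : w ≠ 0 := fun h => hwj (by simp [h])
      have hvwV : v + w ∈ V := V.add_mem hv hwV
      have hvw0 : v + w ≠ 0 := by
        intro h
        apply hwj
        have := congrFun h j
        simpa [hj] using this
      rcases wtLB v w h3 hwv with h | h | h | h
      · exact ⟨w, hwV, h⟩
      · exact ⟨v + w, hvwV, h⟩
      · rcases h with h | h | h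
        · exact absurd (wtL0 w h) hw0
        · exact absurd h (hw w hwV hw0).1
        · exact absurd h (hw w hwV hw0).2
      · rcases h with h | h
        · exact absurd h (hw (v + w) hvwV hvw0).1
        · exact absurd h (hw (v + w) hvwV hvw0).2
    · exact ⟨v, hv, h4⟩
    · exact absurd h5 hv1
  obtain ⟨m, hm⟩ := wtL4 a ha4
  obtain ⟨w, hwV, hwm⟩ := hcol m
  have hw0 : w ≠ 0 := fun h => hwm (by simp [h])
  have hawV : a + w ∈ V := V.add_mem ha hwV
  have haw0 : a + w ≠ 0 := by
    intro h
    apply hwm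
    have := congrFun h m
    simpa [hm] using this
  rcases wtLD a w ha4 m hm hwm with h | h | ⟨σ, h1, h2, h3⟩
  · rcases h with h | h
    · exact absurd h (hw w hwV hw0).1
    · exact absurd h (hw w hwV hw0).2
  · rcases h with h | h
    · exact absurd h (hw (a + w) hawV haw0).1
    · exact absurd h (hw (a + w) hawV haw0).2
  · exact ⟨σ, a, ha, w, hwV, a + w, hawV, h1, h2, h3⟩
end

section
/- If a binary linear code C with m×n parity-check matrix H has no all-zero column and is 5-combinable (with no restriction on minimum distance), then n ≤ 2(2^m − 1) + 2. -/
open Matrix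

lemma wtA : ∀ x : ZMod 2, ¬(hammingWt ![x,x,x,x,x] = 1 ∨ hammingWt ![x,x,x,x,x] = 2) := by decide
lemma wtB : ∀ x y : ZMod 2, ¬(hammingWt ![x,x,y,y,x+y] = 1 ∨ hammingWt ![x,x,y,y,x+y] = 2) := by decide

/-- If `C` (no all-zero column, no restriction on minimum distance) is
5-combinable, then `n ≤ 2 * (2^m − 1) + 2`. -/
theorem stmt_12 (m n : ℕ) (H : Matrix (Fin m) (Fin n) (ZMod 2))
    (hcol : NoZeroColumn H) (hcomb : Combinable m n 5 H) :
    n ≤ 2 * (2 ^ m - 1) + 2 := by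
  classical
  set f : Fin n → (Fin m → ZMod 2) := fun j i => H i j with hf
  have hfne : ∀ j, f j ≠ 0 := by
    intro j h
    obtain ⟨i, hi⟩ := hcol j
    exact hi (congrFun h i)
  set V : Finset (Fin m → ZMod 2) := Finset.univ.image f with hV
  set cnt : (Fin m → ZMod 2) → ℕ :=
    fun a => (Finset.univ.filter (fun j => f j = a)).card with hcnt
  have hlin : ∀ (u : Fin m → ZMod 2) (j : Fin n),
      vecMul u H j = ∑ i, u i * f j i := by
    intro u j; simp [Matrix.vecMul, dotProduct, hf]
  -- Lemma A : no value occurs 5 times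
  have hA : ∀ a, cnt a ≤ 4 := by
    intro a
    by_contra hc
    push_neg at hc
    obtain ⟨t, hts, htc⟩ := Finset.exists_subset_card_eq hc
    let e := t.orderIsoOfFin htc
    have hsinj : Function.Injective (fun k : Fin 5 => (e k : Fin n)) :=
      fun p q hpq => e.injective (Subtype.ext hpq)
    obtain ⟨u, hu0, hu⟩ := hcomb _ hsinj
    have hfs : ∀ k : Fin 5, f ((e k : Fin n)) = a := by
      intro k
      have := hts (e k).2
      simpa using (Finset.mem_filter.mp this).2
    have hv : (fun k : Fin 5 => vecMul u H ((e k : Fin n)))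
        = ![∑ i, u i * a i, ∑ i, u i * a i, ∑ i, u i * a i, ∑ i, u i * a i, ∑ i, u i * a i] := by
      funext k
      rw [hlin, hfs k]
      fin_cases k <;> rfl
    rw [hv] at hu
    exact wtA _ hu
  -- Lemma B : if a,b appear twice each with a ≠ b, then a+b is not a column
  have hB : ∀ a b, 2 ≤ cnt a → 2 ≤ cnt b → a ≠ b → a + b ∉ V := by
    intro a b ha hb hab hmem
    obtain ⟨j1, hj1, j2, hj2, hj12⟩ :=
      Finset.one_lt_card.mp (lt_of_lt_of_le one_lt_two ha)
    obtain ⟨j3, hj3, j4, hj4, hj34⟩ :=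
      Finset.one_lt_card.mp (lt_of_lt_of_le one_lt_two hb)
    obtain ⟨j5, _, hj5⟩ := Finset.mem_image.mp hmem
    have hfj1 : f j1 = a := (Finset.mem_filter.mp hj1).2
    have hfj2 : f j2 = a := (Finset.mem_filter.mp hj2).2
    have hfj3 : f j3 = b := (Finset.mem_filter.mp hj3).2
    have hfj4 : f j4 = b := (Finset.mem_filter.mp hj4).2
    have ha0 : a ≠ 0 := hfj1 ▸ hfne j1
    have hb0 : b ≠ 0 := hfj3 ▸ hfne j3
    have hab5a : a + b ≠ a := fun h => hb0 (by
      have := congrArg (fun x => x - a) h; simpa using this)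
    have hab5b : a + b ≠ b := fun h => ha0 (by
      have := congrArg (fun x => x - b) h; simpa [add_comm] using this)
    have d13 : j1 ≠ j3 := fun h => hab (by rw [← hfj1, h, hfj3])
    have d14 : j1 ≠ j4 := fun h => hab (by rw [← hfj1, h, hfj4])
    have d23 : j2 ≠ j3 := fun h => hab (by rw [← hfj2, h, hfj3])
    have d24 : j2 ≠ j4 := fun h => hab (by rw [← hfj2, h, hfj4])
    have d15 : j1 ≠ j5 := fun h => hab5a (by rw [← hj5, ← h, hfj1])
    have d25 : j2 ≠ j5 := fun h => hab5a (by rw [← hj5, ← h, hfj2])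
    have d35 : j3 ≠ j5 := fun h => hab5b (by rw [← hj5, ← h, hfj3])
    have d45 : j4 ≠ j5 := fun h => hab5b (by rw [← hj5, ← h, hfj4])
    have hsinj : Function.Injective ![j1,j2,j3,j4,j5] := by
      intro p q h
      fin_cases p <;> fin_cases q <;> simp_all
    obtain ⟨u, hu0, hu⟩ := hcomb _ hsinj
    have hv : (fun k : Fin 5 => vecMul u H (![j1,j2,j3,j4,j5] k))
        = ![∑ i, u i * a i, ∑ i, u i * a i, ∑ i, u i * b i, ∑ i, u i * b i,
            (∑ i, u i * a i) + ∑ i, u i * b i] := by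
      funext k
      fin_cases k <;>
        simp [hlin, hfj1, hfj2, hfj3, hfj4, hj5, Pi.add_apply, mul_add,
          Finset.sum_add_distrib]
    rw [hv] at hu
    exact wtB _ _ hu
  -- counting
  have hn : n = ∑ a ∈ V, cnt a := by
    have h1 := Finset.card_eq_sum_card_fiberwise
      (fun (x : Fin n) (_ : x ∈ Finset.univ) => Finset.mem_image_of_mem f (Finset.mem_univ x))
    simpa [hcnt] using h1
  set D : Finset (Fin m → ZMod 2) := V.filter (fun a => 2 ≤ cnt a) with hD
  set k : ℕ := D.card with hk
  have hsplit : ∑ a ∈ D, cnt a + ∑ a ∈ V.filter (fun a => ¬ 2 ≤ cnt a), cnt a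
      = ∑ a ∈ V, cnt a := Finset.sum_filter_add_sum_filter_not V _ cnt
  have hsumD : ∑ a ∈ D, cnt a ≤ 4 * k := by
    calc ∑ a ∈ D, cnt a ≤ ∑ _a ∈ D, 4 := Finset.sum_le_sum (fun a _ => hA a)
    _ = 4 * k := by rw [Finset.sum_const, smul_eq_mul, mul_comm]
  have hsumN : ∑ a ∈ V.filter (fun a => ¬ 2 ≤ cnt a), cnt a
      ≤ (V.filter (fun a => ¬ 2 ≤ cnt a)).card := by
    calc ∑ a ∈ V.filter (fun a => ¬ 2 ≤ cnt a), cnt a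
        ≤ ∑ _a ∈ V.filter (fun a => ¬ 2 ≤ cnt a), 1 := by
          refine Finset.sum_le_sum (fun a ha => ?_)
          have := (Finset.mem_filter.mp ha).2
          omega
    _ = _ := by rw [Finset.sum_const, smul_eq_mul, mul_one]
  have hfilters : k + (V.filter (fun a => ¬ 2 ≤ cnt a)).card = V.card :=
    Finset.card_filter_add_card_filter_not _
  have hVsub : V ⊆ Finset.univ.erase (0 : Fin m → ZMod 2) := by
    intro a ha
    obtain ⟨j, _, hj⟩ := Finset.mem_image.mp ha
    exact Finset.mem_erase.mpr ⟨hj ▸ hfne j, Finset.mem_univ a⟩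
  have hNZcard : (Finset.univ.erase (0 : Fin m → ZMod 2)).card = 2 ^ m - 1 := by
    rw [Finset.card_erase_of_mem (Finset.mem_univ _), Finset.card_univ]
    simp [Fintype.card_fun]
  have hVcard : V.card ≤ 2 ^ m - 1 := hNZcard ▸ Finset.card_le_card hVsub
  have hkV : k ≤ V.card := Finset.card_le_card (Finset.filter_subset _ _)
  have hpow : 1 ≤ 2 ^ m := Nat.one_le_two_pow
  rcases Nat.lt_or_ge k 2 with hk2 | hk2
  · -- k ≤ 1
    rcases Nat.eq_zero_or_pos n with hn0 | hn0
    · omega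
    · have hVne : V.Nonempty := by
        obtain ⟨j⟩ := Fin.pos_iff_nonempty.mp hn0
        exact ⟨f j, Finset.mem_image_of_mem f (Finset.mem_univ j)⟩
      have h1V : 1 ≤ V.card := Finset.card_pos.mpr hVne
      omega
  · -- k ≥ 2 : use the sums a0 + b
    obtain ⟨a0, ha0D⟩ : D.Nonempty := Finset.card_pos.mp (by omega)
    set S : Finset (Fin m → ZMod 2) := (D.erase a0).image (fun b => a0 + b) with hS
    have hScard : S.card = k - 1 := by
      rw [hS, Finset.card_image_of_injective _ (add_right_injective a0),
        Finset.card_erase_of_mem ha0D]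
    have hneg : ∀ x : Fin m → ZMod 2, -x = x := by
      intro x; funext i; revert x; exact fun x => by
        have : ∀ z : ZMod 2, -z = z := by decide
        exact this (x i)
    have hSV : ∀ x ∈ S, x ∉ V := by
      intro x hx
      obtain ⟨b, hb, rfl⟩ := Finset.mem_image.mp hx
      have hbD := Finset.mem_erase.mp hb
      exact hB a0 b (Finset.mem_filter.mp ha0D).2 (Finset.mem_filter.mp hbD.2).2
        (Ne.symm hbD.1)
    have hSsub : S ⊆ Finset.univ.erase (0 : Fin m → ZMod 2) := by
      intro x hx
      obtain ⟨b, hb, rfl⟩ := Finset.mem_image.mp hx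
      refine Finset.mem_erase.mpr ⟨?_, Finset.mem_univ _⟩
      intro h0
      have hz : ∀ z w : ZMod 2, z + w = 0 → w = z := by decide
      exact (Finset.mem_erase.mp hb).1 (funext fun i => hz _ _ (congrFun h0 i))
    have hdisj : Disjoint S V := Finset.disjoint_left.mpr hSV
    have hSVcard : S.card + V.card ≤ 2 ^ m - 1 := by
      rw [← Finset.card_union_of_disjoint hdisj, ← hNZcard]
      exact Finset.card_le_card (Finset.union_subset hSsub hVsub)
    omega
end

section
/- For every m ≥ 3, the (2^m−1, 2^m−m−1) Hamming code is not 6-combinable: there exist 6 columns of H_E such that the resulting submatrix has all rows of Hamming weight 0, 3, or 4. -/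
set_option maxHeartbeats 1000000


open Matrix

/-- Auxiliary: a function on `Fin 6` given by six values. -/
def pick6 {α : Type*} (x0 x1 x2 x3 x4 x5 : α) : Fin 6 → α
  | ⟨0, _⟩ => x0
  | ⟨1, _⟩ => x1
  | ⟨2, _⟩ => x2
  | ⟨3, _⟩ => x3
  | ⟨4, _⟩ => x4
  | ⟨5, _⟩ => x5


/-- For `m ≥ 3`, the `(2^m−1, 2^m−m−1)` Hamming code is not 6-combinable: there
are 6 columns of `H_E` such that every row of the resulting submatrix has
Hamming weight 0, 3, or 4. -/
theorem stmt_14 (m : ℕ) (hm : 3 ≤ m)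
    (H : Matrix (Fin m) (Fin (2 ^ m - 1)) (ZMod 2))
    (hHam : ∀ v : Fin m → ZMod 2, v ≠ 0 → ∃! j, (fun i => H i j) = v) :
    ∃ s : Fin 6 → Fin (2 ^ m - 1), Function.Injective s ∧
      ∀ u : Fin m → ZMod 2, u ≠ 0 →
        hammingWt (fun j => (vecMul u H) (s j)) = 0 ∨
        hammingWt (fun j => (vecMul u H) (s j)) = 3 ∨
        hammingWt (fun j => (vecMul u H) (s j)) = 4 := by
  set a0 : Fin m := ⟨0, by omega⟩ with ha0
  set a1 : Fin m := ⟨1, by omega⟩ with ha1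
  set a2 : Fin m := ⟨2, by omega⟩ with ha2
  have h01 : a0 ≠ a1 := by simp [ha0, ha1, Fin.ext_iff]
  have h02 : a0 ≠ a2 := by simp [ha0, ha2, Fin.ext_iff]
  have h12 : a1 ≠ a2 := by simp [ha1, ha2, Fin.ext_iff]
  set e : Fin m → (Fin m → ZMod 2) := fun a => Pi.single a 1 with he
  set v : Fin 6 → (Fin m → ZMod 2) :=
    pick6 (e a0) (e a1) (e a2) (e a0 + e a1) (e a0 + e a2) (e a1 + e a2) with hv
  have hself : ∀ a : Fin m, e a a = 1 := by intro a; simp [he]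
  have hne1 : ∀ a : Fin m, e a ≠ 0 := fun a h =>
    one_ne_zero (α := ZMod 2) (by simpa [hself] using congrFun h a)
  have hne2 : ∀ a b : Fin m, a ≠ b → e a + e b ≠ 0 := fun a b hab h =>
    one_ne_zero (α := ZMod 2)
      (by simpa [he, Pi.single_apply, hab, hab.symm] using congrFun h a)
  have hvne : ∀ j, v j ≠ 0 := by
    intro j
    fin_cases j <;> simp only [hv, pick6] <;>
      first
      | exact hne1 _
      | exact hne2 _ _ h01
      | exact hne2 _ _ h02
      | exact hne2 _ _ h12
  have hcol : ∀ j, (fun i => H i ((hHam (v j) (hvne j)).choose)) = v j :=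
    fun j => (hHam (v j) (hvne j)).choose_spec.1
  refine ⟨fun j => (hHam (v j) (hvne j)).choose, ?_, ?_⟩
  · intro j j' hjj
    have hvv : v j = v j' := by
      rw [← hcol j, ← hcol j']; simp only at hjj; rw [hjj]
    set T : Fin 6 → (ZMod 2 × ZMod 2 × ZMod 2) :=
      pick6 (1,0,0) (0,1,0) (0,0,1) (1,1,0) (1,0,1) (0,1,1) with hT
    have hTv : ∀ j, (v j a0, v j a1, v j a2) = T j := by
      intro j
      fin_cases j <;>
        simp [hv, hT, pick6, he, Pi.single_apply, h01, h02, h12,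
          h01.symm, h02.symm, h12.symm]
    have hTinj : Function.Injective T := by decide
    apply hTinj
    rw [← hTv j, ← hTv j', hvv]
  · intro u hu
    have hdot : ∀ a : Fin m, ∑ i, u i * e a i = u a := by
      intro a
      simp [he, Pi.single_apply, Finset.sum_ite_eq', mul_comm]
    have key : (fun j => (vecMul u H) ((hHam (v j) (hvne j)).choose)) =
        pick6 (u a0) (u a1) (u a2) (u a0 + u a1) (u a0 + u a2) (u a1 + u a2) := by
      funext j
      have h1 : vecMul u H ((hHam (v j) (hvne j)).choose) = ∑ i, u i * v j i := by
        simp only [vecMul, dotProduct]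
        congr 1
        funext i
        rw [← congrFun (hcol j) i]
      rw [h1]
      fin_cases j <;>
        simp [hv, pick6, mul_add, Finset.sum_add_distrib, hdot]
    rw [key]
    have h2 : ∀ x : ZMod 2, x = 0 ∨ x = 1 := by decide
    rcases h2 (u a0) with h0 | h0 <;> rcases h2 (u a1) with h1 | h1 <;>
      rcases h2 (u a2) with hh2 | hh2 <;>
      rw [h0, h1, hh2] <;> decide
end
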